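/- arXiv:2203.14796 — 3 statements merged into one kernel-verified Lean document; each statement's English description precedes it below -/
import Mathlib

section
/- (Word-counting interpretation of p_k.) Let m ≥ 1 and 0 ≤ k ≤ m−1 be integers. The number of words w over the three-letter alphabet {U, D∘, D•} such that (i) w contains exactly m occurrences of U, exactly k+1 occurrences of D∘ and exactly m−k−1 occurrences of D• (so w has length 2m), (ii) the first letter of w is D∘, and (iii) w contains no occurrence of the letter U immediately followed by the letter D•, equals C(m−1,k)·C(m+k,k) = p_k(m), where C(·,·) is the ordinary binomial coefficient. -/
/-- The three-letter alphabet `{U, D∘, D•}`. -/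
inductive Letter3 : Type
  | U : Letter3
  | Do : Letter3
  | Db : Letter3
  deriving DecidableEq

open Letter3

/-- decode a binary skeleton `v` (true = U, false = Do) and block sizes `c`. -/
def decode : List Bool → List ℕ → List Letter3
  | [], _ => []
  | true :: v, c => .U :: decode v c
  | false :: v, [] => .Do :: decode v []
  | false :: v, n :: c => .Do :: (List.replicate n .Db ++ decode v c)

theorem decode_count_U : ∀ (v : List Bool) (c : List ℕ),
    (decode v c).count U = v.count true
  | [], _ => by simp [decode]
  | true :: v, c => by simp [decode, decode_count_U v c, List.count_cons]
  | false :: v, [] => by simp [decode, decode_count_U v [], List.count_cons]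
  | false :: v, n :: c => by
      simp [decode, decode_count_U v c, List.count_cons, List.count_replicate]

theorem decode_count_Do : ∀ (v : List Bool) (c : List ℕ),
    (decode v c).count Do = v.count false
  | [], _ => by simp [decode]
  | true :: v, c => by simp [decode, decode_count_Do v c, List.count_cons]
  | false :: v, [] => by simp [decode, decode_count_Do v [], List.count_cons]
  | false :: v, n :: c => by
      simp [decode, decode_count_Do v c, List.count_cons, List.count_replicate]

theorem decode_count_Db : ∀ (v : List Bool) (c : List ℕ),
    c.length = v.count false → (decode v c).count Db = c.sum
  | [], c => by
      simp only [List.count_nil]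
      intro h; simp at h; subst h; simp [decode]
  | true :: v, c => by
      intro h
      simp only [List.count_cons] at h
      simp [decode, decode_count_Db v c (by simpa using h), List.count_cons]
  | false :: v, [] => by
      intro h; simp [List.count_cons] at h
  | false :: v, n :: c => by
      intro h
      simp only [List.length_cons, List.count_cons_self] at h
      simp [decode, decode_count_Db v c (by omega), List.count_cons,
        List.count_replicate]

theorem decode_head_ne_Db : ∀ (v : List Bool) (c : List ℕ),
    (decode v c).head? ≠ some Db
  | [], _ => by simp [decode]
  | true :: v, c => by simp [decode]
  | false :: v, [] => by simp [decode]
  | false :: v, n :: c => by simp [decode]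

theorem decode_head_Do : ∀ (v : List Bool) (c : List ℕ),
    ((decode v c).head? = some Do ↔ v.head? = some false)
  | [], _ => by simp [decode]
  | true :: v, c => by simp [decode]
  | false :: v, [] => by simp [decode]
  | false :: v, n :: c => by simp [decode]

theorem not_infix_replicate_append (rest : List Letter3)
    (h : ¬ [U, Db] <:+: rest) : ∀ n, ¬ [U, Db] <:+: (List.replicate n Db ++ rest)
  | 0 => by simpa using h
  | n + 1 => by
    rw [List.replicate_succ, List.cons_append, List.infix_cons_iff]
    rintro (hp | hi)
    · obtain ⟨t, ht⟩ := hp; simp at ht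
    · exact not_infix_replicate_append rest h n hi

theorem decode_not_infix : ∀ (v : List Bool) (c : List ℕ),
    ¬ [U, Db] <:+: decode v c
  | [], _ => by simp [decode]
  | true :: v, c => by
    rw [decode, List.infix_cons_iff]
    rintro (hp | hi)
    · obtain ⟨t, ht⟩ := hp
      simp only [List.cons_append, List.cons.injEq] at ht
      have := decode_head_ne_Db v c
      rw [← ht.2] at this
      simp at this
    · exact decode_not_infix v c hi
  | false :: v, [] => by
    rw [decode, List.infix_cons_iff]
    rintro (hp | hi)
    · obtain ⟨t, ht⟩ := hp; simp at ht
    · exact decode_not_infix v [] hi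
  | false :: v, n :: c => by
    rw [decode, List.infix_cons_iff]
    rintro (hp | hi)
    · obtain ⟨t, ht⟩ := hp; simp at ht
    · exact not_infix_replicate_append _ (decode_not_infix v c) n hi

theorem replicate_append_cancel : ∀ (n n' : ℕ) (s s' : List Letter3),
    s.head? ≠ some Db → s'.head? ≠ some Db →
    List.replicate n Db ++ s = List.replicate n' Db ++ s' → n = n' ∧ s = s'
  | 0, 0, s, s', _, _, h => ⟨rfl, by simpa using h⟩
  | 0, n' + 1, s, s', hs, _, h => by
    simp only [List.replicate_succ, List.replicate_zero, List.nil_append,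
      List.cons_append] at h
    subst h; simp at hs
  | n + 1, 0, s, s', _, hs', h => by
    simp only [List.replicate_succ, List.replicate_zero, List.nil_append,
      List.cons_append] at h
    rw [← h] at hs'; simp at hs'
  | n + 1, n' + 1, s, s', hs, hs', h => by
    simp only [List.replicate_succ, List.cons_append, List.cons.injEq] at h
    obtain ⟨hn, hs2⟩ := replicate_append_cancel n n' s s' hs hs' h.2
    exact ⟨by omega, hs2⟩

theorem decode_eq_nil : ∀ (v : List Bool) (c : List ℕ), decode v c = [] → v = []
  | [], _, _ => rfl
  | true :: v, c, h => by simp [decode] at h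
  | false :: v, [], h => by simp [decode] at h
  | false :: v, n :: c, h => by simp [decode] at h

theorem decode_inj : ∀ (v v' : List Bool) (c c' : List ℕ),
    c.length = v.count false → c'.length = v'.count false →
    decode v c = decode v' c' → v = v' ∧ c = c'
  | [], v', c, c', hc, hc', h => by
    have hv' : v' = [] := decode_eq_nil v' c' (by rw [← h]; simp [decode])
    subst hv'
    simp only [List.count_nil] at hc hc'
    rw [List.length_eq_zero_iff] at hc hc'
    exact ⟨rfl, hc.trans hc'.symm⟩
  | v, [], c, c', hc, hc', h => by
    have hv : v = [] := decode_eq_nil v c (by rw [h]; simp [decode])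
    subst hv
    simp only [List.count_nil] at hc hc'
    rw [List.length_eq_zero_iff] at hc hc'
    exact ⟨rfl, hc.trans hc'.symm⟩
  | true :: v, true :: v', c, c', hc, hc', h => by
    rw [decode, decode, List.cons.injEq] at h
    simp only [List.count_cons] at hc hc'
    obtain ⟨h1, h2⟩ := decode_inj v v' c c' (by simpa using hc) (by simpa using hc') h.2
    exact ⟨by rw [h1], h2⟩
  | true :: v, false :: v', c, c', hc, hc', h => by
    rcases c' with _ | ⟨n', c'⟩ <;> simp [decode] at h
  | false :: v, true :: v', c, c', hc, hc', h => by
    rcases c with _ | ⟨n, c⟩ <;> simp [decode] at h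
  | false :: v, false :: v', c, c', hc, hc', h => by
    simp only [List.count_cons_self] at hc hc'
    rcases c with _ | ⟨n, c⟩; · simp at hc
    rcases c' with _ | ⟨n', c'⟩; · simp at hc'
    simp only [List.length_cons] at hc hc'
    rw [decode, decode, List.cons.injEq] at h
    obtain ⟨hn, hs⟩ := replicate_append_cancel n n' _ _
      (decode_head_ne_Db v c) (decode_head_ne_Db v' c') h.2
    obtain ⟨h1, h2⟩ := decode_inj v v' c c' (by omega) (by omega) hs
    exact ⟨by rw [h1], by rw [hn, h2]⟩

theorem strip_Db : ∀ (w : List Letter3),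
    ∃ n w', w = List.replicate n Db ++ w' ∧ w'.head? ≠ some Db
  | [] => ⟨0, [], by simp⟩
  | Db :: t => by
    obtain ⟨n, w', h1, h2⟩ := strip_Db t
    exact ⟨n + 1, w', by simp [List.replicate_succ, h1], h2⟩
  | U :: t => ⟨0, U :: t, by simp⟩
  | Do :: t => ⟨0, Do :: t, by simp⟩

theorem decode_surj : ∀ (N : ℕ) (w : List Letter3), w.length ≤ N →
    ¬ [U, Db] <:+: w → w.head? ≠ some Db →
    ∃ v c, c.length = v.count false ∧ decode v c = w
  | _, [], _, _, _ => ⟨[], [], by simp, rfl⟩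
  | 0, x :: t, hlen, _, _ => by simp at hlen
  | N + 1, U :: t, hlen, hinf, _ => by
    have hinf' : ¬ [U, Db] <:+: t := fun h => hinf (h.trans (List.suffix_cons U t).isInfix)
    have hhd' : t.head? ≠ some Db := by
      intro hd
      rcases t with _ | ⟨x, t'⟩
      · simp at hd
      · simp only [List.head?_cons, Option.some.injEq] at hd
        subst hd
        exact hinf ⟨[], t', rfl⟩
    obtain ⟨v, c, h1, h2⟩ := decode_surj N t (by simpa using hlen) hinf' hhd'
    exact ⟨true :: v, c, by simpa using h1, by rw [decode, h2]⟩
  | N + 1, Do :: t, hlen, hinf, _ => by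
    obtain ⟨n, rest, hrest, hrhd⟩ := strip_Db t
    have hsub : rest <:+: Do :: t := by
      rw [hrest]
      exact ((List.suffix_append _ rest).trans (List.suffix_cons Do _)).isInfix
    have hinf' : ¬ [U, Db] <:+: rest := fun h => hinf (h.trans hsub)
    have hlen' : rest.length ≤ N := by
      have := congrArg List.length hrest
      simp only [List.length_append, List.length_replicate] at this
      simp only [List.length_cons] at hlen
      omega
    obtain ⟨v, c, h1, h2⟩ := decode_surj N rest hlen' hinf' hrhd
    refine ⟨false :: v, n :: c, by simpa using h1, ?_⟩
    rw [decode, h2, ← hrest]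
  | N + 1, Db :: t, _, _, hhd => by simp at hhd

theorem count_true_add_count_false : ∀ (l : List Bool),
    l.count true + l.count false = l.length
  | [] => rfl
  | true :: t => by
    have := count_true_add_count_false t
    simp [List.count_cons]
    omega
  | false :: t => by
    have := count_true_add_count_false t
    simp [List.count_cons]
    omega

instance finB (a b : ℕ) :
    Finite {l : List Bool // l.count true = a ∧ l.count false = b} := by
  have : Finite {l : List Bool // l.length = a + b} := by
    have := List.finite_length_eq Bool (a + b)
    exact this.to_subtype
  apply Finite.of_injective (fun x =>
    (⟨x.1, by rw [← count_true_add_count_false x.1, x.2.1, x.2.2]⟩ :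
      {l : List Bool // l.length = a + b}))
  intro x y h
  simpa [Subtype.ext_iff] using h

theorem cardB : ∀ (a b : ℕ),
    Nat.card {l : List Bool // l.count true = a ∧ l.count false = b} =
      (a + b).choose a
  | 0, b => by
    rw [Nat.choose_zero_right]
    rw [Nat.card_eq_one_iff_unique]
    constructor
    · constructor
      rintro ⟨l, hl⟩ ⟨l', hl'⟩
      have e : ∀ (t : List Bool), t.count true = 0 → t.count false = b →
          t = List.replicate b false := by
        intro t ht hf
        have := count_true_add_count_false t
        rw [List.eq_replicate_iff]
        refine ⟨by omega, ?_⟩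
        intro x hx
        cases x
        · rfl
        · exact absurd (List.count_pos_iff.2 hx) (by omega)
      simp [Subtype.ext_iff, e l hl.1 hl.2, e l' hl'.1 hl'.2]
    · exact ⟨⟨List.replicate b false, by simp [List.count_replicate]⟩⟩
  | a + 1, 0 => by
    rw [Nat.choose_self]
    rw [Nat.card_eq_one_iff_unique]
    constructor
    · constructor
      rintro ⟨l, hl⟩ ⟨l', hl'⟩
      have e : ∀ (t : List Bool), t.count true = a + 1 → t.count false = 0 →
          t = List.replicate (a + 1) true := by
        intro t ht hf
        have := count_true_add_count_false t
        rw [List.eq_replicate_iff]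
        refine ⟨by omega, ?_⟩
        intro x hx
        cases x
        · exact absurd (List.count_pos_iff.2 hx) (by omega)
        · rfl
      simp [Subtype.ext_iff, e l hl.1 hl.2, e l' hl'.1 hl'.2]
    · exact ⟨⟨List.replicate (a + 1) true, by simp [List.count_replicate]⟩⟩
  | a + 1, b + 1 => by
    have key : Nat.card {l : List Bool // l.count true = a + 1 ∧ l.count false = b + 1} =
        Nat.card {l : List Bool // l.count true = a ∧ l.count false = b + 1} +
        Nat.card {l : List Bool // l.count true = a + 1 ∧ l.count false = b} := by
      rw [← Nat.card_sum]
      apply Nat.card_congr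
      apply Equiv.symm
      apply Equiv.ofBijective (f := fun x => match x with
        | .inl ⟨t, ht⟩ => ⟨true :: t, by simp [List.count_cons, ht.1, ht.2]⟩
        | .inr ⟨t, ht⟩ => ⟨false :: t, by simp [List.count_cons, ht.1, ht.2]⟩)
      constructor
      · rintro (⟨t, ht⟩ | ⟨t, ht⟩) (⟨t', ht'⟩ | ⟨t', ht'⟩) h <;>
          simp_all [Subtype.ext_iff]
      · rintro ⟨l, hl⟩
        rcases l with _ | ⟨x, t⟩
        · simp at hl
        cases x
        · exact ⟨.inr ⟨t, by simp [List.count_cons] at hl ⊢; omega⟩, rfl⟩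
        · exact ⟨.inl ⟨t, by simp [List.count_cons] at hl ⊢; omega⟩, rfl⟩
    rw [key, cardB a (b + 1), cardB (a + 1) b]
    have h1 : a + (b + 1) = a + b + 1 := by ring
    have h2 : a + 1 + b = a + b + 1 := by ring
    have h3 : a + 1 + (b + 1) = a + b + 1 + 1 := by ring
    rw [h1, h2, h3,
      show (a + b + 1 + 1).choose (a + 1) = (a + b + 1).choose a + (a + b + 1).choose (a + 1)
        from Nat.choose_succ_succ _ _]

instance finN (n s : ℕ) :
    Finite {c : List ℕ // c.length = n ∧ c.sum = s} := by
  have : Finite {l : List (Fin (s + 1)) // l.length = n} := by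
    have := List.finite_length_eq (Fin (s + 1)) n
    exact this.to_subtype
  apply Finite.of_injective (fun x =>
    (⟨x.1.map (fun y => (⟨min y s, by omega⟩ : Fin (s + 1))), by simp [x.2.1]⟩ :
      {l : List (Fin (s + 1)) // l.length = n}))
  rintro ⟨l, hl⟩ ⟨l', hl'⟩ h
  simp only [Subtype.mk.injEq] at h ⊢
  have key : ∀ (t : List ℕ), t.sum = s →
      (t.map (fun y => (⟨min y s, by omega⟩ : Fin (s + 1)))).map Fin.val = t := by
    intro t ht
    rw [List.map_map]
    have : ∀ y ∈ t, (Fin.val ∘ fun y => (⟨min y s, by omega⟩ : Fin (s + 1))) y = id y := by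
      intro y hy
      have : y ≤ s := ht ▸ List.single_le_sum (by simp) y hy
      simp [Nat.min_eq_left this]
    rw [List.map_congr_left this, List.map_id]
  exact (key l hl.2).symm.trans ((congrArg (List.map Fin.val) h).trans (key l' hl'.2))

def incHead : List ℕ → List ℕ
  | [] => []
  | x :: t => (x + 1) :: t

theorem cardN_rec (n s : ℕ) :
    Nat.card {c : List ℕ // c.length = n + 1 ∧ c.sum = s + 1} =
    Nat.card {c : List ℕ // c.length = n ∧ c.sum = s + 1} +
    Nat.card {c : List ℕ // c.length = n + 1 ∧ c.sum = s} := by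
  rw [← Nat.card_sum]
  apply Nat.card_congr
  apply Equiv.symm
  apply Equiv.ofBijective (f := fun x => match x with
    | .inl ⟨t, ht⟩ => ⟨0 :: t, by simp [ht.1, ht.2]⟩
    | .inr ⟨c, hc⟩ => ⟨incHead c, by
        rcases c with _ | ⟨x, t⟩
        · simp at hc
        · simp [incHead] at hc ⊢; omega⟩)
  constructor
  · rintro (⟨t, ht⟩ | ⟨c, hc⟩) (⟨t', ht'⟩ | ⟨c', hc'⟩) h <;>
      [skip; skip; skip; skip]
    · simp_all [Subtype.ext_iff]
    · rcases c' with _ | ⟨x, t'⟩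
      · simp at hc'
      · simp [incHead, Subtype.ext_iff] at h
    · rcases c with _ | ⟨x, t⟩
      · simp at hc
      · simp [incHead, Subtype.ext_iff] at h
    · rcases c with _ | ⟨x, t⟩
      · simp at hc
      rcases c' with _ | ⟨x', t'⟩
      · simp at hc'
      simp only [incHead, Subtype.mk.injEq, List.cons.injEq] at h
      simp [Subtype.ext_iff, List.cons.injEq]
      exact ⟨by omega, h.2⟩
  · rintro ⟨l, hl⟩
    rcases l with _ | ⟨x, t⟩
    · simp at hl
    rcases x with _ | y
    · exact ⟨.inl ⟨t, by simp at hl ⊢; omega⟩, rfl⟩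
    · refine ⟨.inr ⟨y :: t, by simp at hl ⊢; omega⟩, ?_⟩
      simp [incHead]

theorem cardN : ∀ (n s : ℕ),
    Nat.card {c : List ℕ // c.length = n + 1 ∧ c.sum = s} = (s + n).choose n
  | 0, s => by
    rw [Nat.choose_zero_right, Nat.card_eq_one_iff_unique]
    constructor
    · constructor
      rintro ⟨l, hl⟩ ⟨l', hl'⟩
      have e : ∀ (t : List ℕ), t.length = 1 → t.sum = s → t = [s] := by
        intro t h1 h2
        rcases t with _ | ⟨x, t⟩
        · simp at h1
        rcases t with _ | ⟨y, t⟩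
        · simp at h2; simp [h2]
        · simp at h1
      simp [Subtype.ext_iff, e l hl.1 hl.2, e l' hl'.1 hl'.2]
    · exact ⟨⟨[s], by simp⟩⟩
  | n + 1, 0 => by
    rw [Nat.zero_add, Nat.choose_self, Nat.card_eq_one_iff_unique]
    constructor
    · constructor
      rintro ⟨l, hl⟩ ⟨l', hl'⟩
      have e : ∀ (t : List ℕ), t.length = n + 2 → t.sum = 0 →
          t = List.replicate (n + 2) 0 := by
        intro t h1 h2
        rw [List.eq_replicate_iff]
        exact ⟨h1, fun x hx => by
          have := List.sum_eq_zero_iff.1 h2 x hx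
          omega⟩
      simp [Subtype.ext_iff, e l hl.1 hl.2, e l' hl'.1 hl'.2]
    · exact ⟨⟨List.replicate (n + 2) 0, by simp⟩⟩
  | n + 1, s + 1 => by
    rw [cardN_rec, cardN n (s + 1), cardN (n + 1) s]
    have h1 : s + 1 + n = s + n + 1 := by ring
    have h2 : s + (n + 1) = s + n + 1 := by ring
    have h3 : s + 1 + (n + 1) = s + n + 1 + 1 := by ring
    rw [h1, h2, h3,
      show (s + n + 1 + 1).choose (n + 1) = (s + n + 1).choose n + (s + n + 1).choose (n + 1)
        from Nat.choose_succ_succ _ _]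

instance finA (a b : ℕ) :
    Finite {l : List Bool // l.count true = a ∧ l.count false = b ∧
      l.head? = some false} := by
  apply Finite.of_injective (fun x =>
    (⟨x.1, x.2.1, x.2.2.1⟩ : {l : List Bool // l.count true = a ∧ l.count false = b}))
  rintro ⟨l, hl⟩ ⟨l', hl'⟩ h
  simpa [Subtype.ext_iff] using h

theorem cardA (a b : ℕ) :
    Nat.card {l : List Bool // l.count true = a ∧ l.count false = b + 1 ∧
      l.head? = some false} = (a + b).choose a := by
  rw [← cardB a b]
  apply Nat.card_congr
  apply Equiv.symm
  apply Equiv.ofBijective (f := fun x =>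
    (⟨false :: x.1, by simp [List.count_cons, x.2.1, x.2.2]⟩ :
      {l : List Bool // l.count true = a ∧ l.count false = b + 1 ∧
        l.head? = some false}))
  constructor
  · rintro ⟨t, ht⟩ ⟨t', ht'⟩ h
    simpa [Subtype.ext_iff] using h
  · rintro ⟨l, hl⟩
    rcases l with _ | ⟨x, t⟩
    · simp at hl
    obtain ⟨h1, h2, h3⟩ := hl
    simp only [List.head?_cons, Option.some.injEq] at h3
    subst h3
    exact ⟨⟨t, by simp [List.count_cons] at h1 h2 ⊢; omega⟩, rfl⟩

/-- Word-counting interpretation of `p_k(m)`: the number of words over `{U, D∘, D•}`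
with `m` letters `U`, `k+1` letters `D∘`, `m-k-1` letters `D•`, starting with `D∘`,
and avoiding the factor `U D•`, equals `C(m-1,k)·C(m+k,k) = p_k(m)`. -/
theorem stmt17 (m k : ℕ) (hm : 1 ≤ m) (hk : k ≤ m - 1) :
    Nat.card {w : List Letter3 //
      w.count .U = m ∧ w.count .Do = k + 1 ∧ w.count .Db = m - k - 1 ∧
      w.head? = some .Do ∧ ¬ ([Letter3.U, Letter3.Db] <:+: w)} =
    Nat.choose (m - 1) k * Nat.choose (m + k) k := by
  have key : Nat.card {w : List Letter3 //
      w.count .U = m ∧ w.count .Do = k + 1 ∧ w.count .Db = m - k - 1 ∧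
      w.head? = some .Do ∧ ¬ ([Letter3.U, Letter3.Db] <:+: w)} =
      Nat.card ({l : List Bool // l.count true = m ∧ l.count false = k + 1 ∧
        l.head? = some false} ×
       {c : List ℕ // c.length = k + 1 ∧ c.sum = m - k - 1}) := by
    apply Nat.card_congr
    apply Equiv.symm
    apply Equiv.ofBijective (f := fun x =>
      (⟨decode x.1.1 x.2.1, by
        obtain ⟨⟨v, hv1, hv2, hv3⟩, ⟨c, hc1, hc2⟩⟩ := x
        have hlen : c.length = v.count false := by rw [hc1, hv2]
        refine ⟨by rw [decode_count_U, hv1], by rw [decode_count_Do, hv2],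
          by rw [decode_count_Db v c hlen, hc2], ?_, decode_not_infix v c⟩
        exact (decode_head_Do v c).2 hv3⟩ :
        {w : List Letter3 //
          w.count .U = m ∧ w.count .Do = k + 1 ∧ w.count .Db = m - k - 1 ∧
          w.head? = some .Do ∧ ¬ ([Letter3.U, Letter3.Db] <:+: w)}))
    constructor
    · rintro ⟨⟨v, hv⟩, ⟨c, hc⟩⟩ ⟨⟨v', hv'⟩, ⟨c', hc'⟩⟩ h
      simp only [Subtype.mk.injEq] at h
      obtain ⟨e1, e2⟩ := decode_inj v v' c c'
        (by rw [hc.1, hv.2.1]) (by rw [hc'.1, hv'.2.1]) h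
      simp [Prod.ext_iff, Subtype.ext_iff, e1, e2]
    · rintro ⟨w, h1, h2, h3, h4, h5⟩
      obtain ⟨v, c, hlen, hdec⟩ := decode_surj w.length w le_rfl h5
        (by rw [h4]; simp)
      have e1 : v.count true = m := by rw [← decode_count_U v c, hdec, h1]
      have e2 : v.count false = k + 1 := by rw [← decode_count_Do v c, hdec, h2]
      have e3 : c.sum = m - k - 1 := by rw [← decode_count_Db v c hlen, hdec, h3]
      have e4 : v.head? = some false := (decode_head_Do v c).1 (by rw [hdec, h4])
      exact ⟨⟨⟨v, e1, e2, e4⟩, ⟨c, by rw [hlen, e2], e3⟩⟩, by simp [hdec]⟩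
  rw [key, Nat.card_prod, cardA m k, cardN k (m - k - 1)]
  have h1 : m - k - 1 + k = m - 1 := by omega
  have h2 : (m + k).choose m = (m + k).choose k := by
    rw [← Nat.choose_symm (by omega : k ≤ m + k)]
    congr 1
    omega
  rw [h1, h2, Nat.mul_comm]
end

section
/- (Word-counting interpretation of q_k.) Let m ≥ 1 and 0 ≤ k ≤ m be integers. The number of words w over the three-letter alphabet {U, D∘, D•} such that (i) w contains exactly m occurrences of U, exactly k occurrences of D∘ and exactly m−k occurrences of D• (so w has length 2m), (ii) the last letter of w is U, and (iii) w contains no occurrence of the letter U immediately followed by the letter D•, equals C(m,k)·C(m+k−1,k) = q_k(m), where C(·,·) is the ordinary binomial coefficient. -/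
/-!
Removing the final `U` leaves an arbitrary word avoiding `U D•`. In such a word every `D•` stands
at the start or right after a `D`, so the word is an arrangement of the `a` letters `U` and `b`
letters `D∘`, together with a distribution of the `c` letters `D•` into the `b + 1` slots at the
start and after each `D∘`: there are `C(a + b, b) · C(b + c, c)` of them. The proof obtains this
count by recursion on the first letter, simultaneously with the count `C(a + b, b) · C(b + c - 1, c)`
of those words that do not start with `D•`, i.e. that may follow a `U`.
-/

namespace List

variable {α : Type*}

def subtypeEquivSigmaCons (p : List α → Prop) (hnil : ¬ p []) :
    {w // p w} ≃ Σ x, {t // p (x :: t)} where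
  toFun
    | ⟨[], h⟩ => absurd h hnil
    | ⟨x :: t, h⟩ => ⟨x, t, h⟩
  invFun | ⟨x, t, h⟩ => ⟨x :: t, h⟩
  left_inv
    | ⟨[], h⟩ => absurd h hnil
    | ⟨_ :: _, _⟩ => rfl
  right_inv _ := rfl

theorem natCard_eq_sum_cons [Fintype α] (p : List α → Prop) [Finite {w // p w}]
    (hnil : ¬ p []) : Nat.card {w // p w} = ∑ x, Nat.card {t // p (x :: t)} := by
  have (x : α) : Finite {t // p (x :: t)} :=
    Finite.of_injective (fun t => (⟨x :: t.1, t.2⟩ : {w // p w}))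
      fun _ _ h => Subtype.ext (cons_injective (congrArg Subtype.val h))
  rw [Nat.card_congr (subtypeEquivSigmaCons p hnil), Nat.card_sigma]

theorem natCard_getLast?_eq_some (p : List α → Prop) (a : α) :
    Nat.card {w // w.getLast? = some a ∧ p w} = Nat.card {t // p (t ++ [a])} :=
  Nat.card_congr
    { toFun w := ⟨w.1.dropLast, by
        obtain ⟨t, ht⟩ := getLast?_eq_some_iff.1 w.2.1
        simpa [ht] using w.2.2⟩
      invFun t := ⟨t.1 ++ [a], by simp, t.2⟩
      left_inv w := by
        obtain ⟨t, ht⟩ := getLast?_eq_some_iff.1 w.2.1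
        ext1; simp [ht]
      right_inv t := by simp }

end List

namespace Letter3

instance : Fintype Letter3 := ⟨{U, Do, Db}, fun x => by cases x <;> simp⟩

theorem sum_univ (f : Letter3 → ℕ) : ∑ x, f x = f U + f Do + f Db := by
  change ∑ x ∈ {U, Do, Db}, f x = _
  simp [add_assoc]

theorem length_eq_count_add_count_add_count (w : List Letter3) :
    w.length = w.count U + w.count Do + w.count Db := by
  induction w with
  | nil => rfl
  | cons x t ih => cases x <;> simp [ih] <;> omega

instance (a b c : ℕ) (q : List Letter3 → Prop) :
    Finite {w : List Letter3 // w.count U = a ∧ w.count Do = b ∧ w.count Db = c ∧ q w} :=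
  Set.Finite.to_subtype <| (List.finite_length_eq Letter3 (a + b + c)).subset
    fun w ⟨hU, hDo, hDb, _⟩ => by simp [length_eq_count_add_count_add_count, hU, hDo, hDb]

noncomputable def numAvoiding (a b c : ℕ) : ℕ :=
  Nat.card {w : List Letter3 // w.count U = a ∧ w.count Do = b ∧ w.count Db = c ∧
    ¬ [U, Db] <:+: w}

noncomputable def numAvoidingAfterU (a b c : ℕ) : ℕ :=
  Nat.card {w : List Letter3 // w.count U = a ∧ w.count Do = b ∧ w.count Db = c ∧
    ¬ [U, Db] <:+: U :: w}

theorem UDb_infix_cons_iff {x : Letter3} (hx : x ≠ U) {t : List Letter3} :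
    [U, Db] <:+: x :: t ↔ [U, Db] <:+: t := by
  simp [List.infix_cons_iff (l₂ := t), Ne.symm hx]

theorem UDb_infix_cons_cons {x y : Letter3} {t : List Letter3} :
    [U, Db] <:+: x :: y :: t ↔ (x = U ∧ y = Db) ∨ [U, Db] <:+: y :: t := by
  simp [List.infix_cons_iff (l₂ := y :: t), eq_comm]

theorem numAvoidingAfterU_eq_add {a b c : ℕ} (h : a + b + c ≠ 0) :
    numAvoidingAfterU a b c = (if a = 0 then 0 else numAvoidingAfterU (a - 1) b c) +
      (if b = 0 then 0 else numAvoiding a (b - 1) c) := by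
  rw [numAvoidingAfterU, List.natCard_eq_sum_cons _ (by simp; omega), sum_univ]
  rcases a with _ | a <;> rcases b with _ | b <;>
    simp [numAvoidingAfterU, numAvoiding, UDb_infix_cons_cons, UDb_infix_cons_iff]

theorem numAvoiding_eq_add {a b c : ℕ} (h : a + b + c ≠ 0) :
    numAvoiding a b c = numAvoidingAfterU a b c +
      (if c = 0 then 0 else numAvoiding a b (c - 1)) := by
  rw [numAvoiding, numAvoidingAfterU, List.natCard_eq_sum_cons _ (by simp; omega),
    List.natCard_eq_sum_cons _ (by simp; omega), sum_univ, sum_univ]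
  rcases c with _ | c <;> simp [numAvoiding, UDb_infix_cons_cons, UDb_infix_cons_iff]

theorem natCard_counts_eq_zero (q : List Letter3 → Prop) (hq : q []) :
    Nat.card {w : List Letter3 // w.count U = 0 ∧ w.count Do = 0 ∧ w.count Db = 0 ∧ q w} = 1 :=
  Nat.card_eq_one_iff_unique.2
    ⟨⟨fun ⟨v, hv⟩ ⟨w, hw⟩ => by
      have hv' := length_eq_count_add_count_add_count v
      have hw' := length_eq_count_add_count_add_count w
      simp_all⟩, ⟨⟨[], by simpa using hq⟩⟩⟩

theorem numAvoidingAfterU_eq_and_numAvoiding_eq (a b c : ℕ) :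
    numAvoidingAfterU a b c = (a + b).choose b * (b + c - 1).choose c ∧
      numAvoiding a b c = (a + b).choose b * (b + c).choose c := by
  induction hn : a + b + c using Nat.strong_induction_on generalizing a b c with
  | _ n ih =>
  rcases eq_or_ne (a + b + c) 0 with h0 | h0
  · obtain ⟨rfl, rfl, rfl⟩ : a = 0 ∧ b = 0 ∧ c = 0 := by omega
    refine ⟨natCard_counts_eq_zero _ ?_, natCard_counts_eq_zero _ ?_⟩ <;>
      exact fun h => by simpa using h.length_le
  have hV : numAvoidingAfterU a b c = (a + b).choose b * (b + c - 1).choose c := by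
    rw [numAvoidingAfterU_eq_add h0]
    rcases a with _ | a <;> rcases b with _ | b <;>
      simp only [Nat.add_sub_cancel, if_pos, if_neg (Nat.succ_ne_zero _)]
    · simp [Nat.choose_eq_zero_of_lt (show c - 1 < c by omega)]
    · simp [(ih _ (by omega) 0 b c rfl).2, Nat.add_right_comm b 1 c]
    · simp [(ih _ (by omega) a 0 c rfl).1]
    · rw [(ih _ (by omega) a (b + 1) c rfl).1, (ih _ (by omega) (a + 1) b c rfl).2,
        Nat.add_right_comm b 1 c, Nat.add_sub_cancel, show a + 1 + (b + 1) = a + b + 1 + 1 by omega,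
        Nat.choose_succ_succ', show a + (b + 1) = a + b + 1 by omega, Nat.add_right_comm a 1 b]
      ring
  refine ⟨hV, ?_⟩
  rw [numAvoiding_eq_add h0, hV]
  rcases c with _ | c
  · simp
  · rw [if_neg (by omega), Nat.add_sub_cancel, (ih _ (by omega) a b c rfl).2,
      ← Nat.add_assoc, Nat.add_sub_cancel, Nat.choose_succ_succ']
    ring

theorem natCard_getLast?_eq_U (a b c : ℕ) :
    Nat.card {w : List Letter3 // w.count U = a + 1 ∧ w.count Do = b ∧ w.count Db = c ∧
      w.getLast? = some U ∧ ¬ [U, Db] <:+: w} = numAvoiding a b c := by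
  calc _ = Nat.card {w : List Letter3 // w.getLast? = some U ∧ (w.count U = a + 1 ∧
        w.count Do = b ∧ w.count Db = c ∧ ¬ [U, Db] <:+: w)} :=
        Nat.card_congr (Equiv.subtypeEquivRight fun w => by tauto)
    _ = _ := by
      have (t : List Letter3) : ¬ [U, Db] <:+ t ++ [U] := fun ⟨s, hs⟩ => by
        simpa using congrArg List.getLast? hs
      rw [List.natCard_getLast?_eq_some]
      simp [numAvoiding, List.infix_concat_iff, this]

end Letter3

/-- Word-counting interpretation of `q_k(m)`: the number of words over `{U, D∘, D•}`
with `m` letters `U`, `k` letters `D∘`, `m-k` letters `D•`, ending with `U`,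
and avoiding the factor `U D•`, equals `C(m,k)·C(m+k-1,k) = q_k(m)`. -/
theorem stmt18 (m k : ℕ) (hm : 1 ≤ m) (hk : k ≤ m) :
    Nat.card {w : List Letter3 //
      w.count .U = m ∧ w.count .Do = k ∧ w.count .Db = m - k ∧
      w.getLast? = some .U ∧ ¬ ([Letter3.U, Letter3.Db] <:+: w)} =
    Nat.choose m k * Nat.choose (m + k - 1) k := by
  obtain ⟨n, rfl⟩ := Nat.exists_eq_add_of_le' hm
  rw [Letter3.natCard_getLast?_eq_U, (Letter3.numAvoidingAfterU_eq_and_numAvoiding_eq _ _ _).2,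
    Nat.add_sub_cancel' hk, Nat.add_right_comm, Nat.add_sub_cancel, Nat.choose_symm hk, mul_comm]
end

section
/- (Word-counting interpretation of the quasi-polynomials π.) Let u, d, r, s be nonnegative integers. The number of words over the four-letter alphabet {U, D∘, D•, E} containing exactly u occurrences of U, exactly d occurrences of D•, exactly r occurrences of D∘ and exactly s occurrences of E, and containing no occurrence of the letter U immediately followed by the letter D•, equals C(r+s, s)·C(d+r+s, r+s)·C(u+r+s, r+s), where C(·,·) is the ordinary binomial coefficient. In particular, if ε ∈ {−1,0,1} and d = u+ε−r ≥ 0, this number equals π^{(ε)}_{r,s}(m) for the half-integer m with 2m = u+d+r+s+1. -/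
/-- Generalized binomial coefficient `binom(x,k) = x(x-1)⋯(x-k+1)/k!`. -/
def qbinom (x : ℚ) (k : ℕ) : ℚ := (∏ i ∈ Finset.range k, (x - i)) / (Nat.factorial k)

/-- `p_{k,e}(m) = binom(m+e/2-1,k)·binom(m-e/2+k,k)`. -/
def pke (k : ℕ) (e : ℤ) (m : ℚ) : ℚ :=
  qbinom (m + (e : ℚ) / 2 - 1) k * qbinom (m - (e : ℚ) / 2 + k) k

open Classical in
/-- `π^{(ε)}_{r,s}(m) = C(r+s,s)·p_{r+s,s+1+ε}(m)` if `m-(s+1+ε)/2 ∈ ℤ`, and `0` otherwise. -/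
noncomputable def piQ (r s : ℕ) (ε : ℤ) (m : ℚ) : ℚ :=
  if ∃ z : ℤ, m - ((s : ℚ) + 1 + (ε : ℚ)) / 2 = (z : ℚ) then
    (Nat.choose (r + s) s : ℚ) * pke (r + s) ((s : ℤ) + 1 + ε) m
  else 0

/-- The four-letter alphabet `{U, D∘, D•, E}`. -/
inductive Letter4 : Type
  | U : Letter4
  | Do : Letter4
  | Db : Letter4
  | E : Letter4
  deriving DecidableEq
instance : Fintype Letter4 :=
  ⟨⟨[Letter4.U, Letter4.Do, Letter4.Db, Letter4.E], by decide⟩, fun x => by cases x <;> decide⟩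

open Finset List

abbrev Cond (u d r s : ℕ) (w : List Letter4) : Prop :=
  w.count .U = u ∧ w.count .Db = d ∧ w.count .Do = r ∧ w.count .E = s ∧
    ¬ ([Letter4.U, Letter4.Db] <:+: w)

def LL : ℕ → Finset (List Letter4)
  | 0 => {[]}
  | n+1 => (Finset.univ ×ˢ LL n).image fun p => p.1 :: p.2

lemma mem_LL {n : ℕ} {w : List Letter4} : w ∈ LL n ↔ w.length = n := by
  induction n generalizing w with
  | zero => simp [LL, List.length_eq_zero_iff]
  | succ n ih =>
    simp only [LL, Finset.mem_image, Finset.mem_product]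
    constructor
    · rintro ⟨⟨h, t⟩, ⟨-, ht⟩, rfl⟩
      simp [ih.mp ht]
    · intro hw
      cases w with
      | nil => simp at hw
      | cons h t => exact ⟨(h, t), ⟨Finset.mem_univ _, ih.mpr (by simpa using hw)⟩, rfl⟩

lemma count_sum_eq (w : List Letter4) :
    w.count .U + w.count .Db + w.count .Do + w.count .E = w.length := by
  induction w with
  | nil => simp
  | cons h t ih => cases h <;> simp [List.count_cons] <;> omega

def AC (u d r s : ℕ) : ℕ := ((LL (u+d+r+s)).filter (fun w => Cond u d r s w)).card

def GC (u d r s : ℕ) : ℕ :=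
  ((LL (u+d+r+s)).filter (fun w => Cond u d r s w ∧ w.head? ≠ some .Db)).card

lemma AC_zero : AC 0 0 0 0 = 1 := by decide
lemma GC_zero : GC 0 0 0 0 = 1 := by decide

lemma cons_injective (h : Letter4) : Function.Injective (fun t : List Letter4 => h :: t) :=
  fun a b hab => by simpa using hab

lemma card_fiber (n : ℕ) (p : List Letter4 → Prop) [DecidablePred p] (h : Letter4) :
    ((LL (n+1)).filter (fun w => p w ∧ w.head? = some h)).card
      = ((LL n).filter (fun t => p (h :: t))).card := by
  rw [show (LL (n+1)).filter (fun w => p w ∧ w.head? = some h)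
      = ((LL n).filter (fun t => p (h :: t))).image (fun t => h :: t) from ?_]
  · exact Finset.card_image_of_injective _ (cons_injective h)
  · ext w
    simp only [Finset.mem_filter, Finset.mem_image, mem_LL]
    constructor
    · rintro ⟨hlen, hp, hh⟩
      cases w with
      | nil => simp at hh
      | cons a t =>
        simp only [List.head?_cons, Option.some.injEq] at hh
        subst hh
        exact ⟨t, ⟨by simpa using hlen, hp⟩, rfl⟩
    · rintro ⟨t, ⟨hlen, hp⟩, rfl⟩
      exact ⟨by simpa using hlen, hp, rfl⟩

lemma card_head_split (n : ℕ) (p : List Letter4 → Prop) [DecidablePred p] :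
    ((LL (n+1)).filter p).card
      = ∑ h : Letter4, ((LL (n+1)).filter (fun w => p w ∧ w.head? = some h)).card := by
  rw [← Finset.card_biUnion]
  · congr 1
    ext w
    simp only [Finset.mem_biUnion, Finset.mem_filter, Finset.mem_univ, true_and, mem_LL]
    constructor
    · rintro ⟨hlen, hp⟩
      match w, hlen with
      | a :: t, hlen => exact ⟨a, hlen, hp, rfl⟩
    · rintro ⟨a, hlen, hp, -⟩
      exact ⟨hlen, hp⟩
  · intro a _ b _ hab
    simp only [Finset.disjoint_left, Finset.mem_filter]
    rintro w ⟨-, -, hwa⟩ ⟨-, -, hwb⟩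
    exact hab (by rw [hwa] at hwb; simpa using hwb)

lemma prefix_single_iff (t : List Letter4) : [Letter4.Db] <+: t ↔ t.head? = some .Db := by
  cases t with
  | nil => simp
  | cons a t' => simp [List.cons_prefix_cons, eq_comm]

lemma infix_cons_U (t : List Letter4) :
    ([Letter4.U, Letter4.Db] <:+: (Letter4.U :: t)) ↔
      ([Letter4.U, Letter4.Db] <:+: t) ∨ t.head? = some .Db := by
  rw [List.infix_cons_iff, List.cons_prefix_cons, prefix_single_iff]
  tauto

lemma infix_cons_ne {h : Letter4} (hh : h ≠ .U) (t : List Letter4) :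
    ([Letter4.U, Letter4.Db] <:+: (h :: t)) ↔ ([Letter4.U, Letter4.Db] <:+: t) := by
  rw [List.infix_cons_iff, List.cons_prefix_cons]
  simp [Ne.symm hh]

lemma cond_cons_U (u d r s : ℕ) (t : List Letter4) :
    Cond (u+1) d r s (Letter4.U :: t) ↔ (Cond u d r s t ∧ t.head? ≠ some .Db) := by
  simp only [Cond, List.count_cons, infix_cons_U]
  constructor
  · rintro ⟨h1, h2, h3, h4, h5⟩
    push_neg at h5
    refine ⟨⟨by simpa using h1, by simpa using h2, by simpa using h3, by simpa using h4, h5.1⟩, h5.2⟩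
  · rintro ⟨⟨h1, h2, h3, h4, h5⟩, h6⟩
    refine ⟨by simp [h1], by simp [h2], by simp [h3], by simp [h4], ?_⟩
    push_neg
    exact ⟨h5, h6⟩

lemma cond_cons_E (u d r s : ℕ) (t : List Letter4) :
    Cond u d r (s+1) (Letter4.E :: t) ↔ Cond u d r s t := by
  simp only [Cond, List.count_cons, infix_cons_ne (by simp : Letter4.E ≠ .U)]
  constructor
  · rintro ⟨h1, h2, h3, h4, h5⟩
    exact ⟨by simpa using h1, by simpa using h2, by simpa using h3, by simpa using h4, h5⟩
  · rintro ⟨h1, h2, h3, h4, h5⟩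
    exact ⟨by simp [h1], by simp [h2], by simp [h3], by simp [h4], h5⟩

lemma cond_cons_Do (u d r s : ℕ) (t : List Letter4) :
    Cond u d (r+1) s (Letter4.Do :: t) ↔ Cond u d r s t := by
  simp only [Cond, List.count_cons, infix_cons_ne (by simp : Letter4.Do ≠ .U)]
  constructor
  · rintro ⟨h1, h2, h3, h4, h5⟩
    exact ⟨by simpa using h1, by simpa using h2, by simpa using h3, by simpa using h4, h5⟩
  · rintro ⟨h1, h2, h3, h4, h5⟩
    exact ⟨by simp [h1], by simp [h2], by simp [h3], by simp [h4], h5⟩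

lemma cond_cons_Db (u d r s : ℕ) (t : List Letter4) :
    Cond u (d+1) r s (Letter4.Db :: t) ↔ Cond u d r s t := by
  simp only [Cond, List.count_cons, infix_cons_ne (by simp : Letter4.Db ≠ .U)]
  constructor
  · rintro ⟨h1, h2, h3, h4, h5⟩
    exact ⟨by simpa using h1, by simpa using h2, by simpa using h3, by simpa using h4, h5⟩
  · rintro ⟨h1, h2, h3, h4, h5⟩
    exact ⟨by simp [h1], by simp [h2], by simp [h3], by simp [h4], h5⟩

lemma not_cond_U (d r s : ℕ) (t : List Letter4) : ¬ Cond 0 d r s (Letter4.U :: t) := by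
  rintro ⟨h1, -⟩; simp [List.count_cons] at h1
lemma not_cond_Db (u r s : ℕ) (t : List Letter4) : ¬ Cond u 0 r s (Letter4.Db :: t) := by
  rintro ⟨-, h1, -⟩; simp [List.count_cons] at h1
lemma not_cond_Do (u d s : ℕ) (t : List Letter4) : ¬ Cond u d 0 s (Letter4.Do :: t) := by
  rintro ⟨-, -, h1, -⟩; simp [List.count_cons] at h1
lemma not_cond_E (u d r : ℕ) (t : List Letter4) : ¬ Cond u d r 0 (Letter4.E :: t) := by
  rintro ⟨-, -, -, h1, -⟩; simp [List.count_cons] at h1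

lemma cardU (n u d r s : ℕ) (hn : u+d+r+s = n+1) :
    ((LL n).filter (fun t => Cond u d r s (Letter4.U :: t))).card
      = if 0 < u then GC (u-1) d r s else 0 := by
  cases u with
  | zero =>
    simp only [if_neg (lt_irrefl 0)]
    rw [Finset.card_eq_zero, Finset.filter_eq_empty_iff]
    exact fun {t} _ => not_cond_U d r s t
  | succ u' =>
    have hn2 : u'+d+r+s = n := by omega
    rw [if_pos (Nat.succ_pos u')]
    unfold GC
    rw [Nat.succ_sub_one, hn2]
    congr 1
    apply Finset.filter_congr
    intro t _
    rw [cond_cons_U]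

lemma cardDb (n u d r s : ℕ) (hn : u+d+r+s = n+1) :
    ((LL n).filter (fun t => Cond u d r s (Letter4.Db :: t))).card
      = if 0 < d then AC u (d-1) r s else 0 := by
  cases d with
  | zero =>
    simp only [if_neg (lt_irrefl 0)]
    rw [Finset.card_eq_zero, Finset.filter_eq_empty_iff]
    exact fun {t} _ => not_cond_Db u r s t
  | succ d' =>
    have hn2 : u+d'+r+s = n := by omega
    rw [if_pos (Nat.succ_pos d')]
    unfold AC
    rw [Nat.succ_sub_one, hn2]
    congr 1
    apply Finset.filter_congr
    intro t _
    rw [cond_cons_Db]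

lemma cardDo (n u d r s : ℕ) (hn : u+d+r+s = n+1) :
    ((LL n).filter (fun t => Cond u d r s (Letter4.Do :: t))).card
      = if 0 < r then AC u d (r-1) s else 0 := by
  cases r with
  | zero =>
    simp only [if_neg (lt_irrefl 0)]
    rw [Finset.card_eq_zero, Finset.filter_eq_empty_iff]
    exact fun {t} _ => not_cond_Do u d s t
  | succ r' =>
    have hn2 : u+d+r'+s = n := by omega
    rw [if_pos (Nat.succ_pos r')]
    unfold AC
    rw [Nat.succ_sub_one, hn2]
    congr 1
    apply Finset.filter_congr
    intro t _
    rw [cond_cons_Do]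

lemma cardE (n u d r s : ℕ) (hn : u+d+r+s = n+1) :
    ((LL n).filter (fun t => Cond u d r s (Letter4.E :: t))).card
      = if 0 < s then AC u d r (s-1) else 0 := by
  cases s with
  | zero =>
    simp only [if_neg (lt_irrefl 0)]
    rw [Finset.card_eq_zero, Finset.filter_eq_empty_iff]
    exact fun {t} _ => not_cond_E u d r t
  | succ s' =>
    have hn2 : u+d+r+s' = n := by omega
    rw [if_pos (Nat.succ_pos s')]
    unfold AC
    rw [Nat.succ_sub_one, hn2]
    congr 1
    apply Finset.filter_congr
    intro t _
    rw [cond_cons_E]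

lemma sum4 (f : Letter4 → ℕ) : (∑ h : Letter4, f h) = f .U + f .Do + f .Db + f .E := by
  show Multiset.sum _ = _
  simp [Finset.univ, Fintype.elems]
  ring

lemma AC_rec (u d r s : ℕ) (hsum : u+d+r+s ≠ 0) :
    AC u d r s = (if 0 < u then GC (u-1) d r s else 0)
               + (if 0 < d then AC u (d-1) r s else 0)
               + (if 0 < r then AC u d (r-1) s else 0)
               + (if 0 < s then AC u d r (s-1) else 0) := by
  obtain ⟨n, hn⟩ : ∃ n, u+d+r+s = n+1 := ⟨u+d+r+s-1, by omega⟩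
  have hdef : AC u d r s = ((LL (n+1)).filter (fun w => Cond u d r s w)).card := by
    unfold AC; rw [hn]
  rw [hdef, card_head_split, sum4]
  rw [card_fiber n _ Letter4.U, card_fiber n _ Letter4.Do,
      card_fiber n _ Letter4.Db, card_fiber n _ Letter4.E]
  rw [cardU n u d r s hn, cardDo n u d r s hn, cardDb n u d r s hn, cardE n u d r s hn]
  omega

lemma GC_rec (u d r s : ℕ) (hsum : u+d+r+s ≠ 0) :
    GC u d r s = (if 0 < u then GC (u-1) d r s else 0)
               + (if 0 < r then AC u d (r-1) s else 0)
               + (if 0 < s then AC u d r (s-1) else 0) := by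
  obtain ⟨n, hn⟩ : ∃ n, u+d+r+s = n+1 := ⟨u+d+r+s-1, by omega⟩
  have hdef : GC u d r s = ((LL (n+1)).filter
      (fun w => Cond u d r s w ∧ w.head? ≠ some .Db)).card := by
    unfold GC; rw [hn]
  rw [hdef, card_head_split, sum4]
  rw [card_fiber n _ Letter4.U, card_fiber n _ Letter4.Do,
      card_fiber n _ Letter4.Db, card_fiber n _ Letter4.E]
  have hU : ((LL n).filter
      (fun t => Cond u d r s (Letter4.U :: t) ∧ (Letter4.U :: t).head? ≠ some .Db)).card
      = if 0 < u then GC (u-1) d r s else 0 := by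
    have e : ((LL n).filter
        (fun t => Cond u d r s (Letter4.U :: t) ∧ (Letter4.U :: t).head? ≠ some .Db))
        = ((LL n).filter (fun t => Cond u d r s (Letter4.U :: t))) :=
      Finset.filter_congr (fun t _ => by simp)
    rw [e]
    exact cardU n u d r s hn
  have hDo : ((LL n).filter
      (fun t => Cond u d r s (Letter4.Do :: t) ∧ (Letter4.Do :: t).head? ≠ some .Db)).card
      = if 0 < r then AC u d (r-1) s else 0 := by
    have e : ((LL n).filter
        (fun t => Cond u d r s (Letter4.Do :: t) ∧ (Letter4.Do :: t).head? ≠ some .Db))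
        = ((LL n).filter (fun t => Cond u d r s (Letter4.Do :: t))) :=
      Finset.filter_congr (fun t _ => by simp)
    rw [e]
    exact cardDo n u d r s hn
  have hE : ((LL n).filter
      (fun t => Cond u d r s (Letter4.E :: t) ∧ (Letter4.E :: t).head? ≠ some .Db)).card
      = if 0 < s then AC u d r (s-1) else 0 := by
    have e : ((LL n).filter
        (fun t => Cond u d r s (Letter4.E :: t) ∧ (Letter4.E :: t).head? ≠ some .Db))
        = ((LL n).filter (fun t => Cond u d r s (Letter4.E :: t))) :=
      Finset.filter_congr (fun t _ => by simp)
    rw [e]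
    exact cardE n u d r s hn
  have hDb : ((LL n).filter
      (fun t => Cond u d r s (Letter4.Db :: t) ∧ (Letter4.Db :: t).head? ≠ some .Db)).card
      = 0 := by
    rw [Finset.card_eq_zero, Finset.filter_eq_empty_iff]
    rintro t _ ⟨-, h⟩
    exact h rfl
  rw [hU, hDo, hE, hDb]
  omega

def aCF (u d r s : ℕ) : ℕ :=
  Nat.choose (r+s) s * Nat.choose (d+r+s) (r+s) * Nat.choose (u+r+s) (r+s)

def gCF (u d r s : ℕ) : ℕ :=
  Nat.choose (r+s) s * Nat.choose (d+r+s-1) d * Nat.choose (u+r+s) (r+s)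

-- (P4): C(d+k,k) = C(d+k-1,d) + [d≥1] C(d-1+k,k)
lemma p4 (d k : ℕ) :
    (d+k).choose k = (d+k-1).choose d + (if 0 < d then (d-1+k).choose k else 0) := by
  cases d with
  | zero => simp
  | succ d' =>
    simp only [if_pos (Nat.succ_pos d'), Nat.succ_sub_one]
    cases k with
    | zero => simp [Nat.choose_eq_zero_of_lt (by omega : d' + 0 < d' + 1)]
    | succ k' =>
      have h1 : (d'+1+(k'+1)).choose (k'+1) = (d'+(k'+1)).choose k' + (d'+(k'+1)).choose (k'+1) := by
        rw [show d'+1+(k'+1) = (d'+(k'+1))+1 by omega, Nat.choose_succ_succ']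
      have h2 : (d'+1+(k'+1)-1).choose (d'+1) = (d'+(k'+1)).choose k' := by
        rw [show d'+1+(k'+1)-1 = d'+(k'+1) by omega,
          Nat.choose_symm_of_eq_add (by omega : d'+(k'+1) = (d'+1) + k')]
      omega

lemma a_eq_g_plus (u d r s : ℕ) :
    aCF u d r s = gCF u d r s + (if 0 < d then aCF u (d-1) r s else 0) := by
  unfold aCF gCF
  cases d with
  | zero => simp [p4 0 (r+s)]
  | succ d' =>
    simp only [if_pos (Nat.succ_pos d'), Nat.succ_sub_one]
    have := p4 (d'+1) (r+s)
    simp only [if_pos (Nat.succ_pos d'), Nat.succ_sub_one] at this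
    rw [show d'+1+r+s = d'+1+(r+s) by omega, this,
      show d'+r+s = d'+(r+s) by omega]
    ring

-- (P2): C(u+k,k) = [u≥1] C(u-1+k,k) + C(u+k-1,k-1)   (k ≥ 1)
lemma p2 (u k : ℕ) (hk : k ≠ 0) :
    (u+k).choose k = (if 0 < u then (u-1+k).choose k else 0) + (u+k-1).choose (k-1) := by
  obtain ⟨k', rfl⟩ : ∃ k', k = k'+1 := ⟨k-1, by omega⟩
  cases u with
  | zero => simp
  | succ u' =>
    simp only [if_pos (Nat.succ_pos u'), Nat.succ_sub_one]
    have h1 : (u'+1+(k'+1)).choose (k'+1) = (u'+(k'+1)).choose k' + (u'+(k'+1)).choose (k'+1) := by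
      rw [show u'+1+(k'+1) = (u'+(k'+1))+1 by omega, Nat.choose_succ_succ']
    have h2 : (u'+1+(k'+1)-1).choose k' = (u'+(k'+1)).choose k' := by
      congr 1
      omega
    omega

-- (P1): [r≥1] C(k-1,s) + [s≥1] C(k-1,s-1) = C(k,s) with k = r+s ≠ 0
lemma p1 (r s : ℕ) (h : r+s ≠ 0) :
    (if 0 < r then (r+s-1).choose s else 0) + (if 0 < s then (r+s-1).choose (s-1) else 0)
      = (r+s).choose s := by
  cases r with
  | zero =>
    obtain ⟨s', rfl⟩ : ∃ s', s = s'+1 := ⟨s-1, by omega⟩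
    simp
  | succ r' =>
    cases s with
    | zero => simp
    | succ s' =>
      simp only [if_pos (Nat.succ_pos r'), if_pos (Nat.succ_pos s'), Nat.succ_sub_one,
        show r'+1+(s'+1)-1 = r'+s'+1 by omega, show r'+1+(s'+1) = (r'+s'+1)+1 by omega,
        Nat.choose_succ_succ']
      omega

lemma g_id (u d r s : ℕ) (h : u+d+r+s ≠ 0) :
    gCF u d r s = (if 0 < u then gCF (u-1) d r s else 0)
                + (if 0 < r then aCF u d (r-1) s else 0)
                + (if 0 < s then aCF u d r (s-1) else 0) := by
  rcases Nat.eq_zero_or_pos (r+s) with hk | hk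
  · obtain ⟨rfl, rfl⟩ : r = 0 ∧ s = 0 := by omega
    simp only [if_neg (lt_irrefl 0), Nat.add_zero]
    unfold gCF
    rcases Nat.eq_zero_or_pos u with rfl | hu
    · simp only [if_neg (lt_irrefl 0)]
      have hd : 0 < d := by omega
      simp [Nat.choose_eq_zero_of_lt (show d - 1 < d from by omega)]
    · rw [if_pos hu]
      have : u - 1 + 0 + 0 = u - 1 := by omega
      simp [gCF]
  · -- r + s ≥ 1
    have hu' : (if 0 < u then gCF (u-1) d r s else 0)
        = (if 0 < u then (u-1+(r+s)).choose (r+s) else 0)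
          * ((r+s).choose s * (d+r+s-1).choose d) := by
      rcases Nat.eq_zero_or_pos u with rfl | hu
      · simp
      · rw [if_pos hu, if_pos hu]
        unfold gCF
        rw [show u-1+r+s = u-1+(r+s) by omega]
        ring
    have hr' : (if 0 < r then aCF u d (r-1) s else 0)
        = (if 0 < r then (r+s-1).choose s else 0)
          * ((d+r+s-1).choose (r+s-1) * (u+r+s-1).choose (r+s-1)) := by
      rcases Nat.eq_zero_or_pos r with rfl | hr
      · simp
      · rw [if_pos hr, if_pos hr]
        unfold aCF
        rw [show r-1+s = r+s-1 by omega, show d+(r-1)+s = d+r+s-1 by omega,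
          show u+(r-1)+s = u+r+s-1 by omega]
        ring
    have hs' : (if 0 < s then aCF u d r (s-1) else 0)
        = (if 0 < s then (r+s-1).choose (s-1) else 0)
          * ((d+r+s-1).choose (r+s-1) * (u+r+s-1).choose (r+s-1)) := by
      rcases Nat.eq_zero_or_pos s with rfl | hs
      · simp
      · rw [if_pos hs, if_pos hs]
        unfold aCF
        rw [show r+(s-1) = r+s-1 by omega, show d+r+(s-1) = d+r+s-1 by omega,
          show u+r+(s-1) = u+r+s-1 by omega]
        ring
    rw [hu', hr', hs', add_assoc, ← Nat.add_mul, p1 r s (by omega)]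
    have e3 : (d+r+s-1).choose (r+s-1) = (d+r+s-1).choose d :=
      Nat.choose_symm_of_eq_add (by omega)
    have e1 : (u+(r+s)).choose (r+s)
        = (if 0 < u then (u-1+(r+s)).choose (r+s) else 0) + (u+(r+s)-1).choose ((r+s)-1) :=
      p2 u (r+s) (by omega)
    unfold gCF
    rw [show u+r+s = u+(r+s) by omega, e1, e3,
      show u+(r+s)-1 = u+r+s-1 by omega, show (r+s)-1 = r+s-1 by omega]
    ring

lemma main_count : ∀ n u d r s : ℕ, u+d+r+s = n → AC u d r s = aCF u d r s ∧ GC u d r s = gCF u d r s := by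
  intro n
  induction n using Nat.strong_induction_on with
  | _ n ih =>
    intro u d r s hn
    rcases Nat.eq_zero_or_pos n with rfl | hpos
    · obtain ⟨rfl, rfl, rfl, rfl⟩ : u = 0 ∧ d = 0 ∧ r = 0 ∧ s = 0 := by omega
      refine ⟨by rw [AC_zero]; decide, by rw [GC_zero]; decide⟩
    · have hsum : u+d+r+s ≠ 0 := by omega
      have tU : (if 0 < u then GC (u-1) d r s else 0) = (if 0 < u then gCF (u-1) d r s else 0) := by
        rcases Nat.eq_zero_or_pos u with rfl | hu
        · simp
        · rw [if_pos hu, if_pos hu, (ih (n-1) (by omega) (u-1) d r s (by omega)).2]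
      have tD : (if 0 < d then AC u (d-1) r s else 0) = (if 0 < d then aCF u (d-1) r s else 0) := by
        rcases Nat.eq_zero_or_pos d with rfl | hd
        · simp
        · rw [if_pos hd, if_pos hd, (ih (n-1) (by omega) u (d-1) r s (by omega)).1]
      have tR : (if 0 < r then AC u d (r-1) s else 0) = (if 0 < r then aCF u d (r-1) s else 0) := by
        rcases Nat.eq_zero_or_pos r with rfl | hr
        · simp
        · rw [if_pos hr, if_pos hr, (ih (n-1) (by omega) u d (r-1) s (by omega)).1]
      have tS : (if 0 < s then AC u d r (s-1) else 0) = (if 0 < s then aCF u d r (s-1) else 0) := by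
        rcases Nat.eq_zero_or_pos s with rfl | hs
        · simp
        · rw [if_pos hs, if_pos hs, (ih (n-1) (by omega) u d r (s-1) (by omega)).1]
      constructor
      · rw [AC_rec u d r s hsum, tU, tD, tR, tS]
        have h1 := a_eq_g_plus u d r s
        have h2 := g_id u d r s hsum
        omega
      · rw [GC_rec u d r s hsum, tU, tR, tS]
        exact (g_id u d r s hsum).symm

lemma natcard_eq (u d r s : ℕ) :
    Nat.card {w : List Letter4 // Cond u d r s w} = aCF u d r s := by
  have hset : {w : List Letter4 | Cond u d r s w}
      = ↑((LL (u+d+r+s)).filter (fun w => Cond u d r s w)) := by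
    ext w
    simp only [Set.mem_setOf_eq, Finset.coe_filter, mem_LL]
    constructor
    · intro hc
      refine ⟨?_, hc⟩
      obtain ⟨h1, h2, h3, h4, -⟩ := hc
      have := count_sum_eq w
      omega
    · exact fun h => h.2
  calc Nat.card {w : List Letter4 // Cond u d r s w}
      = Set.ncard {w : List Letter4 | Cond u d r s w} := Nat.card_coe_set_eq _
    _ = ((LL (u+d+r+s)).filter (fun w => Cond u d r s w)).card := by
        rw [hset, Set.ncard_coe_finset]
    _ = aCF u d r s := (main_count _ u d r s rfl).1

lemma prod_desc (n k : ℕ) (h : k ≤ n) :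
    (∏ i ∈ Finset.range k, ((n : ℚ) - i)) = (n.descFactorial k : ℚ) := by
  induction k with
  | zero => simp
  | succ k ihk =>
    rw [Finset.prod_range_succ, ihk (by omega), Nat.descFactorial_succ]
    have : ((n - k : ℕ) : ℚ) = (n : ℚ) - k := by
      have : k ≤ n := by omega
      push_cast [this]
      ring
    rw [Nat.cast_mul, this]
    ring

lemma qbinom_natCast (n k : ℕ) : qbinom (n : ℚ) k = (n.choose k : ℚ) := by
  rcases le_or_gt k n with hkn | hnk
  · rw [qbinom, prod_desc n k hkn, Nat.descFactorial_eq_factorial_mul_choose]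
    rw [Nat.cast_mul, mul_comm, mul_div_assoc, div_self (by exact_mod_cast (Nat.factorial_ne_zero k)), mul_one]
  · have hz : (∏ i ∈ Finset.range k, ((n : ℚ) - i)) = 0 :=
      Finset.prod_eq_zero (Finset.mem_range.mpr hnk) (by simp)
    rw [qbinom, hz, Nat.choose_eq_zero_of_lt hnk]
    simp

/-- Word-counting interpretation of the quasi-polynomials `π`: the number of words over
`{U, D∘, D•, E}` with `u` letters `U`, `d` letters `D•`, `r` letters `D∘`, `s` letters `E`,
avoiding the factor `U D•`, equals `C(r+s,s)·C(d+r+s,r+s)·C(u+r+s,r+s)`; in particular,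
if `ε ∈ {-1,0,1}` and `d = u+ε-r ≥ 0`, it equals `π^{(ε)}_{r,s}(m)` for the half-integer
`m` with `2m = u+d+r+s+1`. -/
theorem stmt19 (u d r s : ℕ) :
    Nat.card {w : List Letter4 //
        w.count .U = u ∧ w.count .Db = d ∧ w.count .Do = r ∧ w.count .E = s ∧
        ¬ ([Letter4.U, Letter4.Db] <:+: w)} =
      Nat.choose (r + s) s * Nat.choose (d + r + s) (r + s) * Nat.choose (u + r + s) (r + s) ∧
    ∀ ε : ℤ, (ε = -1 ∨ ε = 0 ∨ ε = 1) → (d : ℤ) = (u : ℤ) + ε - (r : ℤ) →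
      ((Nat.card {w : List Letter4 //
          w.count .U = u ∧ w.count .Db = d ∧ w.count .Do = r ∧ w.count .E = s ∧
          ¬ ([Letter4.U, Letter4.Db] <:+: w)} : ℚ)) =
        piQ r s ε (((u + d + r + s + 1 : ℕ) : ℚ) / 2) := by
  have key : Nat.card {w : List Letter4 //
      w.count .U = u ∧ w.count .Db = d ∧ w.count .Do = r ∧ w.count .E = s ∧
      ¬ ([Letter4.U, Letter4.Db] <:+: w)} = aCF u d r s := natcard_eq u d r s
  refine ⟨key, ?_⟩
  intro ε hε hd
  have hdq : (d : ℚ) = (u : ℚ) + (ε : ℚ) - (r : ℚ) := by exact_mod_cast hd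
  rw [key]
  set m : ℚ := ((u + d + r + s + 1 : ℕ) : ℚ) / 2 with hm
  have hmq : m = ((u : ℚ) + d + r + s + 1) / 2 := by rw [hm]; push_cast; ring
  rw [piQ, if_pos ⟨(u : ℤ), by rw [hmq]; push_cast; linarith⟩]
  have he1 : m + (((s : ℤ) + 1 + ε : ℤ) : ℚ) / 2 - 1 = ((d + r + s : ℕ) : ℚ) := by
    rw [hmq]; push_cast; linarith
  have he2 : m - (((s : ℤ) + 1 + ε : ℤ) : ℚ) / 2 + ((r + s : ℕ) : ℚ) = ((u + r + s : ℕ) : ℚ) := by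
    rw [hmq]; push_cast; linarith
  rw [pke, he1, he2, qbinom_natCast, qbinom_natCast]
  rw [aCF]
  push_cast
  ring
end
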